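/- arXiv:2410.09597 — 2 statements merged into one kernel-verified Lean document; each statement's English description precedes it below -/
import Mathlib

section
/- Suppose an algorithm interacting with binary-valued reward bandits makes at most T queries and outputs an arm π̂, and suppose that under the true model it succeeds (outputs an α-optimal arm) with probability at least 1 − δ. If instead every query is answered with an independent Bernoulli(1/2) reward, then with probability at least (1 − δ)·2^{−T} the output arm is α-optimal for the true model. Consequently the generalized maximin volume satisfies γ_{F,α} ≥ (1 − δ)·2^{−T}, and hence T ≥ log₂((1 − δ)/γ_{F,α}). -/
open scoped ENNReal

/-- The generalized maximin volume `γ_{F,α}` of a function class `F` on arm set `Arm`. -/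
noncomputable def gmv {Arm : Type*} (F : Set (Arm → ℝ)) (α : ℝ) : ℝ≥0∞ :=
  ⨆ p : PMF Arm, ⨅ f ∈ F, p.toOuterMeasure {π | (⨆ π', f π') - f π ≤ α}

/-- Lower bound via Bernoulli(1/2) simulation. An algorithm interacting with
binary-reward bandits for `T` rounds is described by its output map
`A : (Fin T → Bool) → Arm` from the observed reward sequence to the returned arm.
If for every mean-reward function `f ∈ F` there is a law `μ_f` of the reward
sequence under the true (binary) model under which the output is `α`-optimal with
probability at least `1 − δ`, then feeding the algorithm i.i.d. Bernoulli(1/2)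
rewards (i.e. the uniform distribution on reward sequences) outputs an
`α`-optimal arm with probability at least `(1 − δ)·2^{−T}` simultaneously for all
`f ∈ F`; consequently `γ_{F,α} ≥ (1 − δ)·2^{−T}` and `T ≥ log₂((1 − δ)/γ_{F,α})`. -/
theorem bernoulli_simulation_lower_bound {Arm : Type*}
    (F : Set (Arm → ℝ)) (α δ : ℝ) (hα0 : 0 < α) (hα1 : α < 1)
    (hδ0 : 0 < δ) (hδ1 : δ < 1) (T : ℕ)
    (A : (Fin T → Bool) → Arm)
    (hsucc : ∀ f ∈ F, ∃ μ : PMF (Fin T → Bool),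
      ENNReal.ofReal (1 - δ) ≤
        μ.toOuterMeasure {ω | (⨆ π', f π') - f (A ω) ≤ α}) :
    (∀ f ∈ F,
      ENNReal.ofReal ((1 - δ) / 2 ^ T) ≤
        ((PMF.uniformOfFintype (Fin T → Bool)).map A).toOuterMeasure
          {π | (⨆ π', f π') - f π ≤ α}) ∧
    ENNReal.ofReal ((1 - δ) / 2 ^ T) ≤ gmv F α ∧
    Real.logb 2 ((1 - δ) / (gmv F α).toReal) ≤ (T : ℝ) := by
  have h2T : (0:ℝ) < 2 ^ T := by positivity
  have h1δ : (0:ℝ) < 1 - δ := by linarith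
  have hmain : ∀ f ∈ F,
      ENNReal.ofReal ((1 - δ) / 2 ^ T) ≤
        ((PMF.uniformOfFintype (Fin T → Bool)).map A).toOuterMeasure
          {π | (⨆ π', f π') - f π ≤ α} := by
    intro f hf
    obtain ⟨μ, hμ⟩ := hsucc f hf
    -- the event under μ has positive measure, so nonempty preimage
    have hne : ∃ ω, ω ∈ {ω | (⨆ π', f π') - f (A ω) ≤ α} := by
      by_contra h
      push_neg at h
      have : {ω | (⨆ π', f π') - f (A ω) ≤ α} = ∅ := Set.eq_empty_iff_forall_notMem.2 h
      rw [this] at hμ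
      simp only [MeasureTheory.measure_empty, nonpos_iff_eq_zero] at hμ
      have := ENNReal.ofReal_pos.2 h1δ
      simp [hμ] at this
    obtain ⟨ω₀, hω₀⟩ := hne
    rw [PMF.toOuterMeasure_map_apply]
    rw [PMF.toOuterMeasure_apply]
    have hle : ENNReal.ofReal ((1 - δ) / 2 ^ T) ≤
        (A ⁻¹' {π | (⨆ π', f π') - f π ≤ α}).indicator
          (PMF.uniformOfFintype (Fin T → Bool)) ω₀ := by
      have hω₀' : ω₀ ∈ A ⁻¹' {π | (⨆ π', f π') - f π ≤ α} := hω₀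
      rw [Set.indicator_of_mem hω₀', PMF.uniformOfFintype_apply]
      have hcard : (Fintype.card (Fin T → Bool) : ℝ≥0∞) = 2 ^ T := by
        simp [Fintype.card_fun]
      rw [hcard]
      calc ENNReal.ofReal ((1 - δ) / 2 ^ T)
          ≤ ENNReal.ofReal (1 / 2 ^ T) := by
            apply ENNReal.ofReal_le_ofReal
            gcongr
            linarith
        _ = (ENNReal.ofReal ((2:ℝ) ^ T))⁻¹ := by
            rw [ENNReal.ofReal_div_of_pos h2T]
            simp
        _ = ((2:ℝ≥0∞) ^ T)⁻¹ := by
            congr 1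
            rw [ENNReal.ofReal_pow (by norm_num : (0:ℝ) ≤ 2)]
            norm_num
    exact hle.trans (ENNReal.le_tsum ω₀)
  refine ⟨hmain, ?_, ?_⟩
  · -- gmv bound
    have hgmv : ENNReal.ofReal ((1 - δ) / 2 ^ T) ≤ gmv F α := by
      refine le_trans ?_ (le_iSup _ ((PMF.uniformOfFintype (Fin T → Bool)).map A))
      exact le_iInf₂ hmain
    exact hgmv
  · -- log bound
    have hgmv : ENNReal.ofReal ((1 - δ) / 2 ^ T) ≤ gmv F α := by
      refine le_trans ?_ (le_iSup _ ((PMF.uniformOfFintype (Fin T → Bool)).map A))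
      exact le_iInf₂ hmain
    by_cases htop : gmv F α = ⊤
    · rw [htop]
      simp [Real.logb]
    · have hpos : (0:ℝ) < (gmv F α).toReal := by
        have := ENNReal.toReal_le_toReal (by simp) htop |>.2 hgmv
        rw [ENNReal.toReal_ofReal (by positivity)] at this
        calc (0:ℝ) < (1 - δ) / 2 ^ T := by positivity
          _ ≤ _ := this
      have hkey : (1 - δ) / (gmv F α).toReal ≤ 2 ^ T := by
        have := ENNReal.toReal_le_toReal (by simp) htop |>.2 hgmv
        rw [ENNReal.toReal_ofReal (by positivity)] at this
        rw [div_le_iff₀ hpos]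
        calc (1 - δ) = ((1 - δ) / 2 ^ T) * 2 ^ T := by field_simp
          _ ≤ (gmv F α).toReal * 2 ^ T :=
            mul_le_mul_of_nonneg_right this (by positivity)
          _ = 2 ^ T * (gmv F α).toReal := mul_comm _ _
      calc Real.logb 2 ((1 - δ) / (gmv F α).toReal)
          ≤ Real.logb 2 (2 ^ T) :=
            Real.logb_le_logb_of_le (by norm_num) (div_pos h1δ hpos) hkey
        _ = T := by
            rw [Real.logb_pow, Real.logb_self_eq_one (by norm_num)]; ring
end

section
/- Let γ > 0, δ ∈ (0,1), α ∈ (0,1), and suppose p is a distribution on Π and f : Π → [0,1] satisfies P_{π∼p}(S − f(π) ≤ α/2) ≥ γ where S = sup_π f(π). Draw m = ⌈(1/γ)·log(2/δ)⌉ i.i.d. arms π₁,…,π_m from p; for each, form an estimate f̂(πᵢ) as the average of n = ⌈(8/α²)·log(4m/δ)⌉ i.i.d. reward samples in [0,1] with mean f(πᵢ). Then with probability at least 1 − δ, the arm π̂ maximizing f̂ satisfies S − f(π̂) ≤ α. -/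
/-!
An `α/2`-optimal arm has probability at least `γ`, so all `m` draws miss it with probability at
most `(1 - γ)^m ≤ exp (-γ m) ≤ δ/2`. By Hoeffding's inequality an empirical mean of `n` rewards
is `α/4`-inaccurate with probability at most `2 exp (-n α² / 8)`, so by a union bound some of the
`m` estimates is inaccurate with probability at most `2 m exp (-n α² / 8) ≤ δ/2`. Outside these
two events an empirical maximiser `i` and an `α/2`-optimal sampled arm `i₀` satisfy
`f i ≥ f̂ i - α/4 ≥ f̂ i₀ - α/4 ≥ f i₀ - α/2 ≥ S - α`.
-/

open MeasureTheory ProbabilityTheory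
open scoped ENNReal NNReal

lemma Real.exp_neg_le_of_log_inv_le {x η : ℝ} (hη : 0 < η) (h : Real.log η⁻¹ ≤ x) :
    Real.exp (-x) ≤ η := by
  calc Real.exp (-x) ≤ Real.exp (-Real.log η⁻¹) := Real.exp_le_exp.mpr (neg_le_neg h)
    _ = η := by rw [Real.log_inv, neg_neg, Real.exp_log hη]

lemma ProbabilityTheory.HasSubgaussianMGF.measure_abs_ge_le {Ω : Type*} [MeasurableSpace Ω]
    {μ : Measure Ω} [IsFiniteMeasure μ] {X : Ω → ℝ} {c : ℝ≥0}
    (h : HasSubgaussianMGF X c μ) {ε : ℝ} (hε : 0 ≤ ε) :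
    μ {ω | ε ≤ |X ω|} ≤ ENNReal.ofReal (2 * Real.exp (-ε ^ 2 / (2 * c))) := by
  have hsplit : {ω | ε ≤ |X ω|} ⊆ {ω | ε ≤ X ω} ∪ {ω | ε ≤ (-X) ω} := by
    intro ω hω
    rcases le_abs'.mp (show ε ≤ |X ω| from hω) with h | h
    · exact Or.inr (by simp only [Set.mem_ofPred_eq, Pi.neg_apply]; linarith)
    · exact Or.inl h
  calc μ {ω | ε ≤ |X ω|} ≤ μ {ω | ε ≤ X ω} + μ {ω | ε ≤ (-X) ω} :=
        (measure_mono hsplit).trans (measure_union_le _ _)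
    _ = ENNReal.ofReal (μ.real {ω | ε ≤ X ω} + μ.real {ω | ε ≤ (-X) ω}) := by
        rw [ENNReal.ofReal_add measureReal_nonneg measureReal_nonneg, ofReal_measureReal,
          ofReal_measureReal]
    _ ≤ ENNReal.ofReal (2 * Real.exp (-ε ^ 2 / (2 * c))) := by
        gcongr
        linarith [h.measure_ge_le hε, h.neg.measure_ge_le hε]

lemma measure_pi_abs_mean_sub_integral_ge_le (ν : Measure ℝ) [IsProbabilityMeasure ν]
    (hν : ∀ᵐ x ∂ν, x ∈ Set.Icc (0 : ℝ) 1) (n : ℕ) {ε : ℝ} (hε : 0 ≤ ε) :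
    Measure.pi (fun _ : Fin n => ν) {x | ε ≤ |(∑ j, x j) / n - ∫ y, y ∂ν|} ≤
      ENNReal.ofReal (2 * Real.exp (-(2 * n * ε ^ 2))) := by
  set c := ∫ y, y ∂ν
  have hcoord : HasSubgaussianMGF (fun y => y - c) ((‖(1 : ℝ) - 0‖₊ / 2) ^ 2) ν :=
    hasSubgaussianMGF_of_mem_Icc (X := id) aemeasurable_id hν
  have hcoord_pi (j : Fin n) : HasSubgaussianMGF (fun x : Fin n → ℝ => x j - c)
      ((‖(1 : ℝ) - 0‖₊ / 2) ^ 2) (Measure.pi fun _ => ν) :=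
    HasSubgaussianMGF.of_map (measurable_pi_apply j).aemeasurable
      (by rwa [(measurePreserving_eval (fun _ : Fin n => ν) j).map_eq])
  have hsum : HasSubgaussianMGF (fun x : Fin n → ℝ => ∑ j, (x j - c)) (n / 4)
      (Measure.pi fun _ => ν) := by
    convert HasSubgaussianMGF.sum_of_iIndepFun
      (iIndepFun_pi (μ := fun _ : Fin n => ν) (X := fun _ y => y - c) fun _ => by fun_prop)
      (s := Finset.univ) fun j _ => hcoord_pi j using 1
    simp only [sub_zero, nnnorm_one, one_div, inv_pow, Finset.sum_const, Finset.card_univ,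
      Fintype.card_fin, nsmul_eq_mul]
    ring
  have hset : {x : Fin n → ℝ | ε ≤ |(∑ j, x j) / n - c|} ⊆
      {x | n * ε ≤ |∑ j, (x j - c)|} := by
    intro x hx
    obtain rfl | hn := n.eq_zero_or_pos
    · simp
    have : ∑ j, (x j - c) = n * ((∑ j, x j) / n - c) := by
      rw [Finset.sum_sub_distrib]; field_simp; simp
    simp only [Set.mem_ofPred_eq, this, abs_mul, Nat.abs_cast]
    exact mul_le_mul_of_nonneg_left hx n.cast_nonneg
  refine (measure_mono hset).trans ((hsum.measure_abs_ge_le (by positivity)).trans_eq ?_)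
  congr 3
  push_cast
  field_simp
  ring

section IIDSample

variable {α : Type*} [MeasurableSpace α] (μ : Measure α) [IsProbabilityMeasure μ]

lemma measure_pi_forall_notMem_le {s : Set α} (hs : MeasurableSet s) {γ : ℝ} (hγ : 0 ≤ γ)
    (h : ENNReal.ofReal γ ≤ μ s) (m : ℕ) :
    Measure.pi (fun _ : Fin m => μ) {ω | ∀ i, ω i ∉ s} ≤
      ENNReal.ofReal (Real.exp (-(γ * m))) := by
  have hset : {ω : Fin m → α | ∀ i, ω i ∉ s} = Set.univ.pi fun _ => sᶜ := by
    ext ω; simp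
  have hmiss : μ sᶜ ≤ ENNReal.ofReal (Real.exp (-γ)) :=
    calc μ sᶜ = 1 - μ s := prob_compl_eq_one_sub hs
      _ ≤ 1 - ENNReal.ofReal γ := tsub_le_tsub_left h 1
      _ = ENNReal.ofReal (1 - γ) := by rw [ENNReal.ofReal_sub 1 hγ, ENNReal.ofReal_one]
      _ ≤ ENNReal.ofReal (Real.exp (-γ)) :=
          ENNReal.ofReal_le_ofReal (by linarith [Real.add_one_le_exp (-γ)])
  calc Measure.pi (fun _ : Fin m => μ) {ω | ∀ i, ω i ∉ s} = μ sᶜ ^ m := by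
        rw [hset, Measure.pi_pi, Finset.prod_const, Finset.card_univ, Fintype.card_fin]
    _ ≤ ENNReal.ofReal (Real.exp (-γ)) ^ m := pow_le_pow_left' hmiss m
    _ = ENNReal.ofReal (Real.exp (-(γ * m))) := by
        rw [← ENNReal.ofReal_pow (Real.exp_pos _).le, ← Real.exp_nat_mul]
        ring_nf

lemma measure_pi_exists_mem_le {s : Set α} (hs : MeasurableSet s) {ε : ℝ}
    (h : μ s ≤ ENNReal.ofReal ε) (m : ℕ) :
    Measure.pi (fun _ : Fin m => μ) {ω | ∃ i, ω i ∈ s} ≤ ENNReal.ofReal (m * ε) := by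
  have hset : {ω : Fin m → α | ∃ i, ω i ∈ s} = ⋃ i, Function.eval i ⁻¹' s := by
    ext ω; simp
  calc Measure.pi (fun _ : Fin m => μ) {ω | ∃ i, ω i ∈ s}
      ≤ ∑ i, Measure.pi (fun _ : Fin m => μ) (Function.eval i ⁻¹' s) :=
        hset ▸ measure_iUnion_fintype_le _ _
    _ = m * μ s := by
        simp [(measurePreserving_eval (fun _ : Fin m => μ) _).measure_preimage
          hs.nullMeasurableSet]
    _ ≤ m * ENNReal.ofReal ε := by gcongr
    _ = ENNReal.ofReal (m * ε) := by
        rw [ENNReal.ofReal_mul m.cast_nonneg, ENNReal.ofReal_natCast]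

end IIDSample

lemma MeasureTheory.Measure.compProd_apply_le {α β : Type*} [MeasurableSpace α]
    [MeasurableSpace β] (μ : Measure α) [IsProbabilityMeasure μ] (κ : Kernel α β)
    [IsSFiniteKernel κ] {s : Set (α × β)} (hs : MeasurableSet s) {c : ℝ≥0∞}
    (h : ∀ a, κ a (Prod.mk a ⁻¹' s) ≤ c) :
    (μ ⊗ₘ κ) s ≤ c := by
  rw [Measure.compProd_apply hs]
  exact (lintegral_mono h).trans_eq (by simp)

lemma ofReal_one_sub_add_le_of_compl_inter_subset {Ω : Type*} [MeasurableSpace Ω]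
    (P : Measure Ω) [IsProbabilityMeasure P] {E F T : Set Ω} {a b : ℝ} (ha : 0 ≤ a)
    (hb : 0 ≤ b) (hE : P E ≤ ENNReal.ofReal a) (hF : P F ≤ ENNReal.ofReal b)
    (h : Eᶜ ∩ Fᶜ ⊆ T) :
    ENNReal.ofReal (1 - (a + b)) ≤ P T := by
  have hcover : Set.univ ⊆ T ∪ (E ∪ F) := fun ω _ => by
    by_contra hω
    simp only [Set.mem_union, not_or] at hω
    exact hω.1 (h ⟨hω.2.1, hω.2.2⟩)
  rw [ENNReal.ofReal_sub _ (add_nonneg ha hb), ENNReal.ofReal_one, tsub_le_iff_right,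
    ← measure_univ (μ := P), ENNReal.ofReal_add ha hb]
  calc P Set.univ ≤ P T + P (E ∪ F) := (measure_mono hcover).trans (measure_union_le _ _)
    _ ≤ P T + (P E + P F) := by gcongr; exact measure_union_le _ _
    _ ≤ P T + (ENNReal.ofReal a + ENNReal.ofReal b) := by gcongr

lemma sub_le_of_forall_le_of_abs_sub_le {ι : Type*} {g est : ι → ℝ} {S α : ℝ} {i₀ i : ι}
    (hi₀ : S - g i₀ ≤ α / 2) (hest : ∀ j, |est j - g j| ≤ α / 4) (hi : ∀ k, est k ≤ est i) :
    S - g i ≤ α := by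
  have h₀ := abs_le.mp (hest i₀)
  have h₁ := abs_le.mp (hest i)
  linarith [hi i₀]

lemma exp_neg_mul_natCeil_le {γ δ : ℝ} (hγ : 0 < γ) (hδ : 0 < δ) :
    Real.exp (-(γ * ⌈(1 / γ) * Real.log (2 / δ)⌉₊)) ≤ δ / 2 := by
  refine Real.exp_neg_le_of_log_inv_le (by positivity) ?_
  rw [inv_div, ← div_le_iff₀' hγ, ← one_div_mul_eq_div]
  exact Nat.le_ceil _

lemma natCast_mul_two_mul_exp_neg_natCeil_le {α δ : ℝ} (hα : 0 < α) (hδ : 0 < δ) (m : ℕ) :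
    m * (2 * Real.exp (-(2 * ⌈(8 / α ^ 2) * Real.log (4 * m / δ)⌉₊ * (α / 4) ^ 2))) ≤
      δ / 2 := by
  set n := ⌈(8 / α ^ 2) * Real.log (4 * m / δ)⌉₊
  obtain rfl | hm := m.eq_zero_or_pos
  · rw [Nat.cast_zero, zero_mul]; positivity
  have hexp : Real.exp (-(2 * n * (α / 4) ^ 2)) ≤ δ / (4 * m) := by
    refine Real.exp_neg_le_of_log_inv_le (by positivity) ?_
    have hn : (8 / α ^ 2) * Real.log (4 * m / δ) ≤ n := Nat.le_ceil _
    rw [div_mul_eq_mul_div, div_le_iff₀ (by positivity)] at hn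
    rw [inv_div]
    linarith
  calc m * (2 * Real.exp (-(2 * n * (α / 4) ^ 2))) ≤ m * (2 * (δ / (4 * m))) := by gcongr
    _ = δ / 2 := by field_simp; ring

theorem algorithm_one_correct_general {Arm : Type*} [MeasurableSpace Arm]
    (p : Measure Arm) [IsProbabilityMeasure p]
    (f : Arm → ℝ) (hf : Measurable f)
    (γ δ α : ℝ) (hγ : 0 < γ) (hδ0 : 0 < δ) (hα0 : 0 < α)
    (hp : ENNReal.ofReal γ ≤ p {π | (⨆ π', f π') - f π ≤ α / 2})
    (m : ℕ) (hm : m = ⌈(1 / γ) * Real.log (2 / δ)⌉₊)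
    (n : ℕ) (hn : n = ⌈(8 / α ^ 2) * Real.log (4 * m / δ)⌉₊)
    -- rewards: a Markov kernel giving, for each arm, the law of one reward,
    -- supported on `[0,1]` with mean `f`
    (κ : Kernel Arm ℝ) [IsMarkovKernel κ]
    (hκsupp : ∀ a, κ a (Set.Icc (0 : ℝ) 1)ᶜ = 0)
    (hκmean : ∀ a, (∫ x, x ∂κ a) = f a)
    -- the kernel giving `n` i.i.d. rewards for an arm
    (κn : Kernel Arm (Fin n → ℝ)) [IsMarkovKernel κn]
    (hκn : ∀ a, κn a = Measure.pi (fun _ : Fin n => κ a)) :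
    ENNReal.ofReal (1 - δ) ≤
      (Measure.pi (fun _ : Fin m => (p ⊗ₘ κn)))
        {ω : Fin m → Arm × (Fin n → ℝ) |
          ∀ i, (∀ k, (∑ j, (ω k).2 j) / n ≤ (∑ j, (ω i).2 j) / n) →
            (⨆ π', f π') - f (ω i).1 ≤ α} := by
  set A := {a : Arm | (⨆ π', f π') - f a ≤ α / 2}
  set Bad := {ω₀ : Arm × (Fin n → ℝ) | α / 4 ≤ |(∑ j, ω₀.2 j) / n - f ω₀.1|}
  have hA : MeasurableSet A := measurableSet_le (measurable_const.sub hf) measurable_const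
  have hBad : MeasurableSet Bad := measurableSet_le measurable_const (by fun_prop)
  have hno_good := measure_pi_forall_notMem_le (p ⊗ₘ κn) (measurable_fst hA) hγ.le
    (by rwa [← Measure.fst_apply hA, Measure.fst_compProd]) m
  have hBad_le : (p ⊗ₘ κn) Bad ≤ ENNReal.ofReal (2 * Real.exp (-(2 * n * (α / 4) ^ 2))) := by
    refine Measure.compProd_apply_le p κn hBad fun a => ?_
    have := measure_pi_abs_mean_sub_integral_ge_le (κ a) (ae_iff.mpr (hκsupp a)) n
      (ε := α / 4) (by positivity)
    rwa [hκmean a, ← hκn a] at this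
  have hsome_bad := measure_pi_exists_mem_le (p ⊗ₘ κn) hBad hBad_le m
  rw [← add_halves δ]
  refine ofReal_one_sub_add_le_of_compl_inter_subset _ (by positivity) (by positivity)
    (hno_good.trans (ENNReal.ofReal_le_ofReal (hm ▸ exp_neg_mul_natCeil_le hγ hδ0)))
    (hsome_bad.trans (ENNReal.ofReal_le_ofReal
      (hn ▸ natCast_mul_two_mul_exp_neg_natCeil_le hα0 hδ0 m))) ?_
  rintro ω ⟨hgood, hacc⟩ i hi
  simp only [Set.mem_compl_iff, Set.mem_ofPred_eq, not_forall, not_not, not_exists] at hgood hacc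
  obtain ⟨i₀, hi₀⟩ := hgood
  exact sub_le_of_forall_le_of_abs_sub_le (g := fun k => f (ω k).1) hi₀
    (fun j => (not_le.mp (hacc j)).le) hi

/-- Correctness of Algorithm 1. Draw `m = ⌈(1/γ)·log(2/δ)⌉` i.i.d. arms from a
distribution `p` under which an `(α/2)`-optimal arm has probability at least `γ`;
for each sampled arm take the empirical mean of `n = ⌈(8/α²)·log(4m/δ)⌉` i.i.d.
rewards in `[0,1]` with mean `f(arm)`. Then with probability at least `1 − δ`,
every arm maximizing the empirical means is `α`-optimal. -/
theorem algorithm_one_correct {Arm : Type*} [MeasurableSpace Arm]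
    (p : Measure Arm) [IsProbabilityMeasure p]
    (f : Arm → ℝ) (hf : Measurable f) (hf01 : ∀ x, f x ∈ Set.Icc (0 : ℝ) 1)
    (γ δ α : ℝ) (hγ : 0 < γ) (hδ0 : 0 < δ) (hδ1 : δ < 1) (hα0 : 0 < α) (hα1 : α < 1)
    (hp : ENNReal.ofReal γ ≤ p {π | (⨆ π', f π') - f π ≤ α / 2})
    (m : ℕ) (hm : m = ⌈(1 / γ) * Real.log (2 / δ)⌉₊)
    (n : ℕ) (hn : n = ⌈(8 / α ^ 2) * Real.log (4 * m / δ)⌉₊)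
    -- rewards: a Markov kernel giving, for each arm, the law of one reward,
    -- supported on `[0,1]` with mean `f`
    (κ : Kernel Arm ℝ) [IsMarkovKernel κ]
    (hκsupp : ∀ a, κ a (Set.Icc (0 : ℝ) 1)ᶜ = 0)
    (hκmean : ∀ a, (∫ x, x ∂κ a) = f a)
    -- the kernel giving `n` i.i.d. rewards for an arm
    (κn : Kernel Arm (Fin n → ℝ)) [IsMarkovKernel κn]
    (hκn : ∀ a, κn a = Measure.pi (fun _ : Fin n => κ a)) :
    ENNReal.ofReal (1 - δ) ≤
      (Measure.pi (fun _ : Fin m => (p ⊗ₘ κn)))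
        {ω : Fin m → Arm × (Fin n → ℝ) |
          ∀ i, (∀ k, (∑ j, (ω k).2 j) / n ≤ (∑ j, (ω i).2 j) / n) →
            (⨆ π', f π') - f (ω i).1 ≤ α} :=
  algorithm_one_correct_general p f hf γ δ α hγ hδ0 hα0 hp m hm n hn κ hκsupp hκmean κn hκn
end
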